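/- If M is a bounded subset of B(Ω,Y) with ω_B(M) = 0, then the Hausdorff measure of noncompactness of M in B(Ω,Y) equals μ_γ(M) = sup_{x ∈ Ω} γ(M(x)). -/

import Mathlib

open Metric Set BoundedContinuousFunction

/-- Kuratowski measure of noncompactness: infimum of all `ε > 0` such that the set can be
covered by finitely many sets of diameter at most `ε`. -/
noncomputable def kurMNC {E : Type*} [PseudoMetricSpace E] (A : Set E) : ℝ :=
  sInf {ε : ℝ | 0 < ε ∧ ∃ (n : ℕ) (C : Fin n → Set E),
    A ⊆ ⋃ i, C i ∧ ∀ i, Metric.diam (C i) ≤ ε}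

/-- Hausdorff measure of noncompactness with centers of the `ε`-net restricted to `S`. -/
noncomputable def hausMNCin {E : Type*} [PseudoMetricSpace E] (S A : Set E) : ℝ :=
  sInf {ε : ℝ | 0 < ε ∧ ∃ F : Set E, F.Finite ∧ F ⊆ S ∧
    A ⊆ ⋃ y ∈ F, Metric.closedBall y ε}

/-- Hausdorff measure of noncompactness: infimum of all `ε > 0` such that the set admits a
finite `ε`-net in the whole space. -/
noncomputable def hausMNC {E : Type*} [PseudoMetricSpace E] (A : Set E) : ℝ :=
  hausMNCin Set.univ A

/-- A finite partition of `Ω` (indexed by `Fin n`). -/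
def IsPartition {Ω : Type*} {n : ℕ} (A : Fin n → Set Ω) : Prop :=
  (⋃ i, A i) = Set.univ ∧ Pairwise (Function.onFun Disjoint A)

section Defs

variable {Ω Y : Type*} [TopologicalSpace Ω] [NormedAddCommGroup Y]

/-- `M(x) = {f x : f ∈ M}`. -/
def evalSet (M : Set (Ω →ᵇ Y)) (x : Ω) : Set Y := (fun f : Ω →ᵇ Y => f x) '' M

/-- `M(Ω) = {f x : f ∈ M, x ∈ Ω}`. -/
def rangeSet (M : Set (Ω →ᵇ Y)) : Set Y := ⋃ f ∈ M, Set.range (f : Ω → Y)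

/-- `μ_α(M) = sup_{x ∈ Ω} α(M(x))`. -/
noncomputable def muAlpha (M : Set (Ω →ᵇ Y)) : ℝ := ⨆ x : Ω, kurMNC (evalSet M x)

/-- `μ_γ(M) = sup_{x ∈ Ω} γ(M(x))`. -/
noncomputable def muGamma (M : Set (Ω →ᵇ Y)) : ℝ := ⨆ x : Ω, hausMNC (evalSet M x)

/-- `ω(M)`: infimum of `ε > 0` admitting a finite partition `{A_1, …, A_n}` of `Ω` with
`diam (f '' A i) ≤ ε` for all `f ∈ M` and all `i`. -/
noncomputable def omegaPlain (M : Set (Ω →ᵇ Y)) : ℝ :=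
  sInf {ε : ℝ | 0 < ε ∧ ∃ (n : ℕ) (A : Fin n → Set Ω), IsPartition A ∧
    ∀ f ∈ M, ∀ i, Metric.diam ((f : Ω → Y) '' A i) ≤ ε}

/-- `ω_X(M)`: infimum of `ε > 0` admitting a finite partition `{A_1, …, A_n}` of `Ω` and a
finite set `{φ_1, …, φ_m} ⊆ X` such that every `f ∈ M` has some `j` with
`diam ((f - φ j) '' A i) ≤ ε` for all `i`. -/
noncomputable def omegaX (X : Set (Ω →ᵇ Y)) (M : Set (Ω →ᵇ Y)) : ℝ :=
  sInf {ε : ℝ | 0 < ε ∧ ∃ (n : ℕ) (A : Fin n → Set Ω), IsPartition A ∧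
    ∃ (m : ℕ) (φ : Fin m → (Ω →ᵇ Y)), (∀ j, φ j ∈ X) ∧
      ∀ f ∈ M, ∃ j, ∀ i, Metric.diam ((⇑(f - φ j) : Ω → Y) '' A i) ≤ ε}

end Defs

/-!
Evaluation at a point is 1-Lipschitz, so `γ(M(x)) ≤ γ(M)` for every `x`. Conversely, take a finite
partition `{A_i}` of `Ω` and functions `φ_j` such that each `f ∈ M` differs from some `φ_j` by a
function oscillating at most `ε` on every `A_i`. Pick `p_i ∈ A_i` and finite `r`-nets `F_i` of
`M(p_i)` with `r` slightly above `μ_γ(M)`; the finitely many functions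
`φ_j + ∑ᵢ 𝟙_{A_i} (c_i - φ_j(p_i))` with `c_i ∈ F_i` form an `(ε + r)`-net of `M`. Hence
`γ(M) ≤ μ_γ(M) + ω_B(M)`.
-/

open Bornology Topology
open Filter (Tendsto)
open scoped NNReal

section HausdorffMNC

variable {E F : Type*} [PseudoMetricSpace E] [PseudoMetricSpace F] {A : Set E}

theorem hausMNC_nonneg (A : Set E) : 0 ≤ hausMNC A :=
  Real.sInf_nonneg fun _ hε => hε.1.le

theorem hausMNC_le_of_finite_net {ε : ℝ} (hε : 0 ≤ ε) {T : Set E} (hT : T.Finite)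
    (hAT : A ⊆ ⋃ y ∈ T, closedBall y ε) : hausMNC A ≤ ε := by
  refine le_of_forall_gt_imp_ge_of_dense fun ε' hε' => csInf_le ⟨0, fun _ h => h.1.le⟩ ?_
  exact ⟨hε.trans_lt hε', T, hT, subset_univ T,
    hAT.trans (iUnion₂_mono fun y _ => closedBall_subset_closedBall hε'.le)⟩

theorem exists_finite_net_of_isBounded (hA : IsBounded A) :
    ∃ ε > 0, ∃ T : Set E, T.Finite ∧ A ⊆ ⋃ y ∈ T, closedBall y ε := by
  rcases A.eq_empty_or_nonempty with rfl | ⟨a, -⟩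
  · exact ⟨1, one_pos, ∅, finite_empty, empty_subset _⟩
  obtain ⟨R, hR⟩ := hA.subset_closedBall a
  refine ⟨max R 1, by positivity, {a}, finite_singleton a, ?_⟩
  rw [biUnion_singleton]
  exact hR.trans (closedBall_subset_closedBall (le_max_left R 1))

theorem exists_finite_net_of_hausMNC_lt (hA : IsBounded A) {r : ℝ} (h : hausMNC A < r) :
    ∃ T : Set E, T.Finite ∧ A ⊆ ⋃ y ∈ T, closedBall y r := by
  obtain ⟨ε, hε, T, hT, hAT⟩ := exists_finite_net_of_isBounded hA
  obtain ⟨ε', ⟨-, T', hT', -, hAT'⟩, hε'r⟩ :=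
    exists_lt_of_csInf_lt (by exact ⟨ε, hε, T, hT, subset_univ T, hAT⟩) h
  exact ⟨T', hT', hAT'.trans (iUnion₂_mono fun y _ => closedBall_subset_closedBall hε'r.le)⟩

theorem LipschitzWith.hausMNC_image_le {K : ℝ≥0} {f : E → F} (hf : LipschitzWith K f)
    (hA : IsBounded A) : hausMNC (f '' A) ≤ K * hausMNC A := by
  have hnet : ∀ r > hausMNC A, hausMNC (f '' A) ≤ K * r := fun r hr => by
    obtain ⟨T, hT, hAT⟩ := exists_finite_net_of_hausMNC_lt hA hr
    refine hausMNC_le_of_finite_net (mul_nonneg K.coe_nonneg ((hausMNC_nonneg A).trans hr.le))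
      (hT.image f) ?_
    rintro _ ⟨x, hx, rfl⟩
    obtain ⟨y, hy, hxy⟩ := mem_iUnion₂.1 (hAT hx)
    refine mem_iUnion₂.2 ⟨f y, mem_image_of_mem f hy, mem_closedBall.2 ?_⟩
    exact (hf.dist_le_mul x y).trans
      (mul_le_mul_of_nonneg_left (mem_closedBall.1 hxy) K.coe_nonneg)
  have hK : Tendsto (fun r : ℝ => K * r) (𝓝[>] hausMNC A) (𝓝 (K * hausMNC A)) :=
    ((continuous_const.mul continuous_id).tendsto _).mono_left nhdsWithin_le_nhds
  exact ge_of_tendsto hK (eventually_nhdsWithin_of_forall hnet)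

end HausdorffMNC

section BoundedFunctions

variable {Ω Y : Type*} [TopologicalSpace Ω] [NormedAddCommGroup Y] {M : Set (Ω →ᵇ Y)}

theorem hausMNC_evalSet_le (hM : IsBounded M) (x : Ω) : hausMNC (evalSet M x) ≤ hausMNC M := by
  unfold evalSet
  simpa only [NNReal.coe_one, one_mul] using
    (lipschitz_eval_const (β := Y) x).hausMNC_image_le hM

theorem muGamma_nonneg (M : Set (Ω →ᵇ Y)) : 0 ≤ muGamma M :=
  Real.iSup_nonneg fun _ => hausMNC_nonneg _

theorem muGamma_le_hausMNC (hM : IsBounded M) : muGamma M ≤ hausMNC M :=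
  Real.iSup_le (hausMNC_evalSet_le hM) (hausMNC_nonneg M)

theorem exists_partition_of_omegaX_lt {X : Set (Ω →ᵇ Y)} (hX : X.Nonempty) (hM : IsBounded M)
    {δ : ℝ} (h : omegaX X M < δ) :
    ∃ (n : ℕ) (A : Fin n → Set Ω), IsPartition A ∧ ∃ (m : ℕ) (φ : Fin m → Ω →ᵇ Y),
      (∀ j, φ j ∈ X) ∧ ∀ f ∈ M, ∃ j, ∀ i, diam ((⇑(f - φ j) : Ω → Y) '' A i) < δ := by
  obtain ⟨ψ, hψ⟩ := hX
  obtain ⟨C, hC, hMC⟩ := hM.exists_pos_norm_le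
  have hdiam : ∀ f ∈ M, diam ((⇑(f - ψ) : Ω → Y) '' univ) ≤ 2 * (C + ‖ψ‖) := by
    intro f hf
    refine diam_le_of_forall_dist_le (by positivity) ?_
    rintro _ ⟨x, -, rfl⟩ _ ⟨y, -, rfl⟩
    calc dist ((f - ψ) x) ((f - ψ) y) ≤ 2 * ‖f - ψ‖ := dist_le_two_norm _ x y
      _ ≤ 2 * (C + ‖ψ‖) := by gcongr; exact (norm_sub_le f ψ).trans (by linarith [hMC f hf])
  obtain ⟨ε, ⟨-, n, A, hA, m, φ, hφX, hφ⟩, hεδ⟩ := exists_lt_of_csInf_lt (by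
    exact ⟨2 * (C + ‖ψ‖), by positivity, 1, fun _ => univ,
      ⟨iUnion_const _, Subsingleton.pairwise⟩, 1, fun _ => ψ, fun _ => hψ,
      fun f hf => ⟨0, fun _ => hdiam f hf⟩⟩) h
  exact ⟨n, A, hA, m, φ, hφX, fun f hf => (hφ f hf).imp fun j hj i => (hj i).trans_lt hεδ⟩

variable [DiscreteTopology Ω]

noncomputable def piecewiseConst {n : ℕ} (idx : Ω → Fin n) (u : Fin n → Y) : Ω →ᵇ Y :=
  (mkOfCompact ⟨u, continuous_of_discreteTopology⟩).compContinuous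
    ⟨idx, continuous_of_discreteTopology⟩

@[simp]
theorem piecewiseConst_apply {n : ℕ} (idx : Ω → Fin n) (u : Fin n → Y) (x : Ω) :
    piecewiseConst idx u x = u (idx x) :=
  rfl

theorem dist_add_piecewiseConst_le [Nonempty Ω] {n : ℕ} {f φ : Ω →ᵇ Y} {idx : Ω → Fin n}
    {p : Fin n → Ω} {c : Fin n → Y} {ε r : ℝ}
    (hφ : ∀ x, dist ((f - φ) x) ((f - φ) (p (idx x))) ≤ ε)
    (hc : ∀ i, dist (f (p i)) (c i) ≤ r) :
    dist f (φ + piecewiseConst idx fun i => c i - φ (p i)) ≤ ε + r := by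
  refine dist_le_iff_of_nonempty.2 fun x => ?_
  set i := idx x
  calc dist (f x) ((φ + piecewiseConst idx fun i => c i - φ (p i)) x)
      = ‖((f - φ) x - (f - φ) (p i)) + (f (p i) - c i)‖ := by
        rw [dist_eq_norm]
        congr 1
        simp only [coe_add, coe_sub, Pi.add_apply, Pi.sub_apply, piecewiseConst_apply]
        abel
    _ ≤ dist ((f - φ) x) ((f - φ) (p i)) + dist (f (p i)) (c i) := by
        rw [dist_eq_norm, dist_eq_norm]; exact norm_add_le _ _
    _ ≤ ε + r := add_le_add (hφ x) (hc i)

theorem exists_finite_net_of_partition [Nonempty Ω] {n m : ℕ} {A : Fin n → Set Ω}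
    (hA : ⋃ i, A i = univ) {φ : Fin m → Ω →ᵇ Y} {ε r : ℝ}
    (hφ : ∀ f ∈ M, ∃ j, ∀ i, diam ((⇑(f - φ j) : Ω → Y) '' A i) ≤ ε)
    (hnet : ∀ x, ∃ T : Set Y, T.Finite ∧ evalSet M x ⊆ ⋃ y ∈ T, closedBall y r) :
    ∃ G : Set (Ω →ᵇ Y), G.Finite ∧ M ⊆ ⋃ g ∈ G, closedBall g (ε + r) := by
  choose idx hidx using fun x => mem_iUnion.1 (hA ▸ mem_univ x : x ∈ ⋃ i, A i)
  let p : Fin n → Ω := fun i => Classical.epsilon (· ∈ A i)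
  have hp : ∀ x, p (idx x) ∈ A (idx x) := fun x => Classical.epsilon_spec ⟨x, hidx x⟩
  choose T hT hMT using hnet
  let net : Fin m → (Fin n → Y) → Ω →ᵇ Y := fun j c =>
    φ j + piecewiseConst idx fun i => c i - φ j (p i)
  refine ⟨image2 net univ (univ.pi fun i => T (p i)),
    finite_univ.image2 _ (Finite.pi fun i => hT _), fun f hf => ?_⟩
  obtain ⟨j, hj⟩ := hφ f hf
  choose c hcT hfc using fun i => mem_iUnion₂.1 (hMT (p i) ⟨f, hf, rfl⟩)
  refine mem_iUnion₂.2 ⟨net j c, mem_image2_of_mem (mem_univ j) fun i _ => hcT i,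
    mem_closedBall.2 ?_⟩
  refine dist_add_piecewiseConst_le (fun x => ?_) fun i => mem_closedBall.1 (hfc i)
  have hbdd : IsBounded ((⇑(f - φ j) : Ω → Y) '' A (idx x)) :=
    (f - φ j).isBounded_range.subset (image_subset_range _ _)
  exact (dist_le_diam_of_mem hbdd (mem_image_of_mem _ (hidx x)) (mem_image_of_mem _ (hp x))).trans
    (hj _)

theorem hausMNC_le_muGamma_add_omegaX [Nonempty Ω] (hM : IsBounded M) :
    hausMNC M ≤ muGamma M + omegaX univ M := by
  refine le_of_forall_pos_le_add fun δ hδ => ?_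
  obtain ⟨n, A, ⟨hA, -⟩, m, φ, -, hφ⟩ := exists_partition_of_omegaX_lt univ_nonempty hM
    (lt_add_of_pos_right (omegaX univ M) (half_pos hδ))
  have hnet : ∀ x, ∃ T : Set Y, T.Finite ∧
      evalSet M x ⊆ ⋃ y ∈ T, closedBall y (muGamma M + δ / 2) := fun x =>
    exists_finite_net_of_hausMNC_lt ((lipschitz_eval_const x).isBounded_image hM) <|
      (le_ciSup ⟨hausMNC M, forall_mem_range.2 (hausMNC_evalSet_le hM)⟩ x).trans_lt
        (lt_add_of_pos_right _ (half_pos hδ))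
  obtain ⟨G, hG, hMG⟩ :=
    exists_finite_net_of_partition hA (fun f hf => (hφ f hf).imp fun j hj i => (hj i).le) hnet
  have hω : 0 ≤ omegaX univ M := Real.sInf_nonneg fun _ hε => hε.1.le
  calc hausMNC M ≤ omegaX univ M + δ / 2 + (muGamma M + δ / 2) :=
        hausMNC_le_of_finite_net (by linarith [muGamma_nonneg M]) hG hMG
    _ = muGamma M + omegaX univ M + δ := by ring

end BoundedFunctions

theorem stmt17_general {Ω Y : Type*} [TopologicalSpace Ω] [DiscreteTopology Ω] [Nonempty Ω]
    [NormedAddCommGroup Y]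
    (M : Set (Ω →ᵇ Y)) (hM : Bornology.IsBounded M) (hω : omegaX Set.univ M = 0) :
    hausMNC M = muGamma M :=
  le_antisymm (by simpa [hω] using hausMNC_le_muGamma_add_omegaX hM) (muGamma_le_hausMNC hM)

theorem stmt17 {Ω Y : Type*} [TopologicalSpace Ω] [DiscreteTopology Ω] [Nonempty Ω]
    [NormedAddCommGroup Y] [NormedSpace ℝ Y] [CompleteSpace Y]
    (M : Set (Ω →ᵇ Y)) (hM : Bornology.IsBounded M) (hω : omegaX Set.univ M = 0) :
    hausMNC M = muGamma M :=
  stmt17_general M hM hω
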